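/- Let two radios have energy-per-byte functions E_byte,i(d) = E_i / ((L/(L+H)) · (erf((d/a_i)^(-r_i)))^(L+H)) for i = 1, 2, with E_1 < E_2 (radio 1 cheaper per transmission), a_1, a_2 > 0, and r_1 > r_2 > 0 (radio 1 decays faster, e.g., backscatter). Then: (a) there exists d_small > 0 such that E_byte,1(d) < E_byte,2(d) for all 0 < d < d_small, and (b) there exists d_large such that E_byte,2(d) < E_byte,1(d) for all d > d_large. Hence neither radio dominates the other, and a switching (hybrid) policy strictly improves on each single radio on some nonempty open set of distances. -/

import Mathlib

open Real Filter Set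

noncomputable def erf (x : ℝ) : ℝ := (2 / Real.sqrt Real.pi) * ∫ t in (0:ℝ)..x, Real.exp (-t^2)

/-- Energy per byte of radio `i`. -/
noncomputable def Ebyte (E a r L H : ℝ) (d : ℝ) : ℝ :=
  E / ((L / (L + H)) * (erf ((d / a) ^ (-r))) ^ (L + H))

section helpers
open Topology MeasureTheory intervalIntegral

lemma sqrt_pi_pos : 0 < Real.sqrt Real.pi := Real.sqrt_pos.2 Real.pi_pos

lemma erf_zero : erf 0 = 0 := by simp [erf]

lemma erf_pos {x : ℝ} (hx : 0 < x) : 0 < erf x := by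
  have h : 0 < ∫ t in (0:ℝ)..x, Real.exp (-t^2) := by
    apply intervalIntegral.intervalIntegral_pos_of_pos (f := fun t => Real.exp (-t^2))
    · exact (Real.continuous_exp.comp (by continuity)).intervalIntegrable 0 x
    · intro t; exact Real.exp_pos _
    · exact hx
  exact mul_pos (div_pos two_pos sqrt_pi_pos) h

lemma integrable_exp_neg_sq : Integrable (fun t : ℝ => Real.exp (-t^2)) := by
  have := integrable_exp_neg_mul_sq (b := 1) one_pos
  simpa using this

lemma tendsto_erf_atTop : Tendsto erf atTop (𝓝 1) := by
  have h1 : Tendsto (fun x : ℝ => ∫ t in (0:ℝ)..x, Real.exp (-t^2)) atTop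
      (𝓝 (∫ t in Ioi (0:ℝ), Real.exp (-t^2))) :=
    intervalIntegral_tendsto_integral_Ioi 0 integrable_exp_neg_sq.integrableOn tendsto_id
  have h2 : (∫ t in Ioi (0:ℝ), Real.exp (-t^2)) = Real.sqrt Real.pi / 2 := by
    have := integral_gaussian_Ioi 1
    simpa using this
  rw [h2] at h1
  have := h1.const_mul (2 / Real.sqrt Real.pi)
  convert this using 2
  · rfl
  · field_simp

lemma hasDerivAt_erf_zero : HasDerivAt erf (2 / Real.sqrt Real.pi) 0 := by
  have h : HasDerivAt (fun x : ℝ => ∫ t in (0:ℝ)..x, Real.exp (-t^2)) (Real.exp (-(0:ℝ)^2)) 0 :=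
    intervalIntegral.integral_hasDerivAt_right
      ((Real.continuous_exp.comp (by continuity)).intervalIntegrable 0 0)
      ((Real.continuous_exp.comp (by continuity)).stronglyMeasurableAtFilter _ _)
      (Real.continuous_exp.comp (by continuity)).continuousAt
  have := h.const_mul (2 / Real.sqrt Real.pi)
  simp at this
  exact this

lemma tendsto_erf_div : Tendsto (fun x => erf x / x) (𝓝[>] (0:ℝ)) (𝓝 (2 / Real.sqrt Real.pi)) := by
  have h := hasDerivAt_iff_tendsto_slope.1 hasDerivAt_erf_zero
  have h2 := h.mono_left (nhdsWithin_mono _ fun x hx => ne_of_gt hx)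
  refine h2.congr fun x => ?_
  simp [slope, erf_zero, div_eq_inv_mul]

lemma tendsto_Ebyte_zero (E a r L H : ℝ) (ha : 0 < a) (hrp : 0 < r) (hL : 0 < L) (hH : 0 ≤ H) :
    Tendsto (fun d => Ebyte E a r L H d) (𝓝[>] (0:ℝ)) (𝓝 (E / (L / (L + H)))) := by
  have hdiv : Tendsto (fun d : ℝ => d / a) (𝓝[>] (0:ℝ)) (𝓝[>] (0:ℝ)) := by
    apply tendsto_nhdsWithin_of_tendsto_nhds_of_eventually_within
    · have h0 : Tendsto (fun d : ℝ => d / a) (𝓝 (0:ℝ)) (𝓝 (0 / a)) :=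
        (continuous_id.div_const a).tendsto 0
      simpa using h0.mono_left nhdsWithin_le_nhds
    · filter_upwards [self_mem_nhdsWithin] with d hd
      exact div_pos hd ha
  have hlog : Tendsto (fun d : ℝ => Real.log (d / a)) (𝓝[>] (0:ℝ)) atBot :=
    Real.tendsto_log_nhdsGT_zero.comp hdiv
  have hx : Tendsto (fun d : ℝ => (d / a) ^ (-r)) (𝓝[>] (0:ℝ)) atTop := by
    have h1 : Tendsto (fun d : ℝ => Real.exp (Real.log (d / a) * (-r))) (𝓝[>] (0:ℝ)) atTop :=
      Real.tendsto_exp_atTop.comp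
        ((tendsto_mul_const_atTop_of_neg (by linarith : -r < 0)).2 hlog)
    refine h1.congr' ?_
    filter_upwards [self_mem_nhdsWithin] with d hd
    rw [Real.rpow_def_of_pos (div_pos hd ha)]
  have herf : Tendsto (fun d : ℝ => erf ((d / a) ^ (-r))) (𝓝[>] (0:ℝ)) (𝓝 1) :=
    tendsto_erf_atTop.comp hx
  have hp : (0:ℝ) < L + H := by linarith
  have hrpow : Tendsto (fun d : ℝ => (erf ((d / a) ^ (-r))) ^ (L + H)) (𝓝[>] (0:ℝ)) (𝓝 1) := by
    have hc : ContinuousAt (fun t : ℝ => t ^ (L + H)) 1 :=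
      Real.continuousAt_rpow_const 1 (L + H) (Or.inl one_ne_zero)
    have := hc.tendsto.comp herf
    simpa [Real.one_rpow, Function.comp_def] using this
  have hk : (0:ℝ) < L / (L + H) := div_pos hL hp
  have hden : Tendsto (fun d : ℝ => (L / (L + H)) * (erf ((d / a) ^ (-r))) ^ (L + H))
      (𝓝[>] (0:ℝ)) (𝓝 (L / (L + H))) := by
    simpa using hrpow.const_mul (L / (L + H))
  have := (tendsto_const_nhds (x := E)).div hden hk.ne'
  simpa [Ebyte, Pi.div_def] using this

end helpers

open Topology in
/-- Neither radio dominates: the cheap fast-decaying radio wins at short range,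
the expensive slow-decaying radio wins at long range. -/
theorem stmt9 (E₁ E₂ a₁ a₂ r₁ r₂ L H : ℝ)
    (hE₁ : 0 < E₁) (hE : E₁ < E₂) (ha₁ : 0 < a₁) (ha₂ : 0 < a₂)
    (hr₂ : 0 < r₂) (hr : r₂ < r₁) (hL : 0 < L) (hH : 0 ≤ H) :
    (∃ dsmall : ℝ, 0 < dsmall ∧ ∀ d : ℝ, 0 < d → d < dsmall →
        Ebyte E₁ a₁ r₁ L H d < Ebyte E₂ a₂ r₂ L H d) ∧
    (∃ dlarge : ℝ, ∀ d : ℝ, dlarge < d →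
        Ebyte E₂ a₂ r₂ L H d < Ebyte E₁ a₁ r₁ L H d) := by
  have hp : (0:ℝ) < L + H := by linarith
  have hk : (0:ℝ) < L / (L + H) := div_pos hL hp
  constructor
  · -- short range
    have h1 := tendsto_Ebyte_zero E₁ a₁ r₁ L H ha₁ (lt_trans hr₂ hr) hL hH
    have h2 := tendsto_Ebyte_zero E₂ a₂ r₂ L H ha₂ hr₂ hL hH
    have hc : E₁ / (L / (L + H)) < E₂ / (L / (L + H)) := by gcongr
    have hev := h1.eventually_lt h2 hc
    obtain ⟨u, hu, hsub⟩ := mem_nhdsGT_iff_exists_Ioo_subset.1 hev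
    exact ⟨u, hu, fun d hd1 hd2 => hsub ⟨hd1, hd2⟩⟩
  · -- long range
    set x₁ : ℝ → ℝ := fun d => (d / a₁) ^ (-r₁) with hx₁def
    set x₂ : ℝ → ℝ := fun d => (d / a₂) ^ (-r₂) with hx₂def
    have hxt : ∀ (a r : ℝ), 0 < a → 0 < r →
        Tendsto (fun d : ℝ => (d / a) ^ (-r)) atTop (𝓝[>] (0:ℝ)) := by
      intro a r ha hrp
      apply tendsto_nhdsWithin_of_tendsto_nhds_of_eventually_within
      · exact (tendsto_rpow_neg_atTop hrp).comp (tendsto_id.atTop_div_const ha)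
      · filter_upwards [eventually_gt_atTop (0:ℝ)] with d hd
        exact Real.rpow_pos_of_pos (div_pos hd ha) _
    have h₁ : Tendsto x₁ atTop (𝓝[>] (0:ℝ)) := hxt a₁ r₁ ha₁ (lt_trans hr₂ hr)
    have h₂ : Tendsto x₂ atTop (𝓝[>] (0:ℝ)) := hxt a₂ r₂ ha₂ hr₂
    have hq₁ : Tendsto (fun d => erf (x₁ d) / x₁ d) atTop (𝓝 (2 / Real.sqrt Real.pi)) :=
      tendsto_erf_div.comp h₁
    have hq₂ : Tendsto (fun d => erf (x₂ d) / x₂ d) atTop (𝓝 (2 / Real.sqrt Real.pi)) :=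
      tendsto_erf_div.comp h₂
    have hne : (2 / Real.sqrt Real.pi) ≠ 0 :=
      ne_of_gt (div_pos two_pos (Real.sqrt_pos.2 Real.pi_pos))
    have hxratio : Tendsto (fun d => x₁ d / x₂ d) atTop (𝓝 0) := by
      have hlim : Tendsto (fun d : ℝ => (a₁ ^ r₁ / a₂ ^ r₂) * d ^ (-(r₁ - r₂)))
          atTop (𝓝 0) := by
        have := (tendsto_rpow_neg_atTop (sub_pos.2 hr)).const_mul (a₁ ^ r₁ / a₂ ^ r₂)
        simpa using this
      refine hlim.congr' ?_
      filter_upwards [eventually_gt_atTop (0:ℝ)] with d hd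
      have hd1 : (0:ℝ) < d / a₁ := div_pos hd ha₁
      have hd2 : (0:ℝ) < d / a₂ := div_pos hd ha₂
      rw [hx₁def, hx₂def]
      simp only
      rw [Real.div_rpow hd.le ha₁.le, Real.div_rpow hd.le ha₂.le,
        Real.rpow_neg hd.le r₁, Real.rpow_neg hd.le r₂,
        Real.rpow_neg ha₁.le r₁, Real.rpow_neg ha₂.le r₂,
        Real.rpow_neg hd.le (r₁ - r₂), Real.rpow_sub hd]
      have h1 : d ^ r₁ ≠ 0 := ne_of_gt (Real.rpow_pos_of_pos hd _)
      have h2 : d ^ r₂ ≠ 0 := ne_of_gt (Real.rpow_pos_of_pos hd _)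
      have h3 : a₁ ^ r₁ ≠ 0 := ne_of_gt (Real.rpow_pos_of_pos ha₁ _)
      have h4 : a₂ ^ r₂ ≠ 0 := ne_of_gt (Real.rpow_pos_of_pos ha₂ _)
      field_simp
    have hratio : Tendsto (fun d => erf (x₁ d) / erf (x₂ d)) atTop (𝓝 0) := by
      have hmul := (hq₁.mul hxratio).mul (hq₂.inv₀ hne)
      have heq : (2 / Real.sqrt Real.pi) * 0 * (2 / Real.sqrt Real.pi)⁻¹ = 0 := by ring
      rw [heq] at hmul
      refine hmul.congr' ?_
      filter_upwards [eventually_gt_atTop (0:ℝ)] with d hd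
      have hx1 : (0:ℝ) < x₁ d := Real.rpow_pos_of_pos (div_pos hd ha₁) _
      have hx2 : (0:ℝ) < x₂ d := Real.rpow_pos_of_pos (div_pos hd ha₂) _
      have he2 : (0:ℝ) < erf (x₂ d) := erf_pos hx2
      field_simp
    have hrpow0 : Tendsto (fun d => (erf (x₁ d) / erf (x₂ d)) ^ (L + H)) atTop (𝓝 0) := by
      have hc : ContinuousAt (fun t : ℝ => t ^ (L + H)) 0 :=
        Real.continuousAt_rpow_const 0 (L + H) (Or.inr hp.le)
      have := hc.tendsto.comp hratio
      simpa [Real.zero_rpow hp.ne', Function.comp_def] using this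
    have hR : Tendsto (fun d => (E₂ / E₁) * (erf (x₁ d) / erf (x₂ d)) ^ (L + H))
        atTop (𝓝 0) := by simpa using hrpow0.const_mul (E₂ / E₁)
    have hev : ∀ᶠ d in atTop,
        (E₂ / E₁) * (erf (x₁ d) / erf (x₂ d)) ^ (L + H) < 1 :=
      hR.eventually_lt tendsto_const_nhds zero_lt_one
    have hfin : ∀ᶠ d in atTop, Ebyte E₂ a₂ r₂ L H d < Ebyte E₁ a₁ r₁ L H d := by
      filter_upwards [hev, eventually_gt_atTop (0:ℝ)] with d hRd hd
      have hx1 : (0:ℝ) < x₁ d := Real.rpow_pos_of_pos (div_pos hd ha₁) _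
      have hx2 : (0:ℝ) < x₂ d := Real.rpow_pos_of_pos (div_pos hd ha₂) _
      have he1 : (0:ℝ) < erf (x₁ d) := erf_pos hx1
      have he2 : (0:ℝ) < erf (x₂ d) := erf_pos hx2
      have hp1 : (0:ℝ) < (erf (x₁ d)) ^ (L + H) := Real.rpow_pos_of_pos he1 _
      have hp2 : (0:ℝ) < (erf (x₂ d)) ^ (L + H) := Real.rpow_pos_of_pos he2 _
      rw [Real.div_rpow he1.le he2.le] at hRd
      have hkey : E₂ * (erf (x₁ d)) ^ (L + H) < E₁ * (erf (x₂ d)) ^ (L + H) := by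
        rw [div_mul_div_comm, div_lt_one (by positivity)] at hRd
        exact hRd
      show E₂ / ((L / (L + H)) * (erf ((d / a₂) ^ (-r₂))) ^ (L + H)) <
        E₁ / ((L / (L + H)) * (erf ((d / a₁) ^ (-r₁))) ^ (L + H))
      rw [div_lt_div_iff₀ (by positivity) (by positivity)]
      have : (erf ((d / a₁) ^ (-r₁))) = erf (x₁ d) := rfl
      rw [this]
      have : (erf ((d / a₂) ^ (-r₂))) = erf (x₂ d) := rfl
      rw [this]
      calc E₂ * (L / (L + H) * erf (x₁ d) ^ (L + H))
          = (L / (L + H)) * (E₂ * erf (x₁ d) ^ (L + H)) := by ring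
        _ < (L / (L + H)) * (E₁ * erf (x₂ d) ^ (L + H)) :=
            mul_lt_mul_of_pos_left hkey hk
        _ = E₁ * (L / (L + H) * erf (x₂ d) ^ (L + H)) := by ring
    obtain ⟨N, hN⟩ := eventually_atTop.1 hfin
    exact ⟨N, fun d hd => hN d hd.le⟩
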